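/- Fix κ ≥ 1, r = (r_1,…,r_κ) ∈ ℂ^κ with Re r_i > 0 for all i, and real numbers s > 0, R > 1, 𝒦 ≥ 0. For m ∈ ℤ₊^κ write |m| = m_1+…+m_κ and ⟨m,r⟩ = m_1 r_1+…+m_κ r_κ; for a complex polynomial C(t) = Σ_i a_i t^i set ‖C‖_R = Σ_i |a_i| R^i. For a family η = (C_m)_{m ∈ ℤ₊^κ∖{0}} of complex polynomials with deg C_m ≤ 𝒦|m| for all m, set ‖η‖_0 = Σ_m ‖C_m‖_R / |Γ(⟨m,r⟩/s)|, and let H^0 be the set of such families with ‖η‖_0 < ∞. Then there exists a constant C ≥ 1, depending only on r and s, such that for all η₁ = (a_m), η₂ = (b_m) ∈ H^0 the convolution family η₁η₂ defined by (η₁η₂)_m = Σ_{i} a_i·b_{m−i}, the sum over all i ∈ ℤ₊^κ∖{0} with m−i ∈ ℤ₊^κ∖{0}, satisfies deg (η₁η₂)_m ≤ 𝒦|m| for all m, η₁η₂ ∈ H^0, and ‖η₁η₂‖_0 ≤ C·‖η₁‖_0·‖η₂‖_0. -/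

import Mathlib

/-- The weighted `ℓ¹`-norm on complex polynomials: for `C(t) = Σ_i a_i t^i`,
`‖C‖_R = Σ_i |a_i| R^i`. -/
noncomputable def normR (R : ℝ) (C : Polynomial ℂ) : ℝ :=
  ∑ i ∈ C.support, ‖C.coeff i‖ * R ^ i

/-- `|m| = m_1 + … + m_κ` for a multi-index `m`. -/
def msize {κ : ℕ} (m : Fin κ → ℕ) : ℕ := ∑ i, m i

/-- `⟨m,r⟩ = m_1 r_1 + … + m_κ r_κ`. -/
noncomputable def mdot {κ : ℕ} (r : Fin κ → ℂ) (m : Fin κ → ℕ) : ℂ := ∑ i, (m i : ℂ) * r i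

/-- Convolution (Cauchy product) of families of polynomials indexed by multi-indices. -/
noncomputable def mconv {κ : ℕ} (η₁ η₂ : (Fin κ → ℕ) → Polynomial ℂ) :
    (Fin κ → ℕ) → Polynomial ℂ :=
  fun m => ∑ᶠ (p : (Fin κ → ℕ) × (Fin κ → ℕ)) (_ : p.1 + p.2 = m), η₁ p.1 * η₂ p.2

/-- The Gamma-weighted norm `‖η‖_0 = Σ_{m ≠ 0} ‖C_m‖_R / |Γ(⟨m,r⟩/s)|`. -/
noncomputable def norm0 {κ : ℕ} (r : Fin κ → ℂ) (s R : ℝ)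
    (η : (Fin κ → ℕ) → Polynomial ℂ) : ℝ :=
  ∑' m : {m : Fin κ → ℕ // m ≠ 0},
    normR R (η m.1) / ‖Complex.Gamma (mdot r m.1 / (s : ℂ))‖

/-- Membership in the space `H⁰`: the family is supported on nonzero multi-indices,
satisfies the degree bound `deg C_m ≤ 𝒦|m|`, and has finite norm `‖·‖_0`. -/
def memH0 {κ : ℕ} (r : Fin κ → ℂ) (s R 𝒦 : ℝ) (η : (Fin κ → ℕ) → Polynomial ℂ) : Prop :=
  η 0 = 0 ∧ (∀ m : Fin κ → ℕ, ((η m).natDegree : ℝ) ≤ 𝒦 * msize m) ∧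
  Summable (fun m : {m : Fin κ → ℕ // m ≠ 0} =>
    normR R (η m.1) / ‖Complex.Gamma (mdot r m.1 / (s : ℂ))‖)

/-! The weight `w(m) = ‖Γ(⟨m,r⟩/s)‖` is supermultiplicative up to a constant: for `m ≠ 0` we have
`Re (⟨m,r⟩/s) ≥ δ := minᵢ Re rᵢ / s`, and Euler's identity `Γ(u)Γ(v) = B(u,v)Γ(u+v)` together with
`‖B(u,v)‖ ≤ B(δ,δ)` for `Re u, Re v ≥ δ` gives `w(i)w(j) ≤ B(δ,δ)·w(i+j)`. Since `‖·‖_R` is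
submultiplicative, the `m`-th term of `‖η₁η₂‖_0` is then at most `B(δ,δ)` times the `m`-th term of
the Cauchy product of the series defining `‖η₁‖_0` and `‖η₂‖_0`, and a Cauchy product of
nonnegative summable series is summable with sum the product of the sums. -/

open Finset Polynomial

section normR

variable {R : ℝ}

lemma normR_nonneg (hR : 0 ≤ R) (P : ℂ[X]) : 0 ≤ normR R P :=
  sum_nonneg fun i _ => mul_nonneg (norm_nonneg _) (pow_nonneg hR i)

lemma normR_eq_sum_of_support_subset {P : ℂ[X]} {s : Finset ℕ} (h : P.support ⊆ s) :
    normR R P = ∑ i ∈ s, ‖P.coeff i‖ * R ^ i :=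
  sum_subset h fun i _ hi => by rw [notMem_support_iff.mp hi, norm_zero, zero_mul]

lemma normR_add_le (hR : 0 ≤ R) (P Q : ℂ[X]) : normR R (P + Q) ≤ normR R P + normR R Q := by
  classical
  rw [normR_eq_sum_of_support_subset support_add,
    normR_eq_sum_of_support_subset (subset_union_left (s₂ := Q.support)),
    normR_eq_sum_of_support_subset (subset_union_right (s₁ := P.support)), ← sum_add_distrib]
  gcongr with i
  rw [coeff_add, ← add_mul]
  gcongr
  exact norm_add_le _ _

lemma normR_sum_le (hR : 0 ≤ R) {ι : Type*} (s : Finset ι) (P : ι → ℂ[X]) :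
    normR R (∑ i ∈ s, P i) ≤ ∑ i ∈ s, normR R (P i) :=
  le_sum_of_subadditive (normR R) (by simp [normR]) (normR_add_le hR) s P

lemma normR_C_mul_X_pow (a : ℂ) (n : ℕ) : normR R (C a * X ^ n) = ‖a‖ * R ^ n := by
  rw [normR_eq_sum_of_support_subset (support_C_mul_X_pow_subset n a), sum_singleton,
    coeff_C_mul_X_pow, if_pos rfl]

lemma normR_mul_le (hR : 0 ≤ R) (P Q : ℂ[X]) : normR R (P * Q) ≤ normR R P * normR R Q := by
  have hPQ :
      P * Q = ∑ i ∈ P.support, ∑ j ∈ Q.support, C (P.coeff i * Q.coeff j) * X ^ (i + j) := by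
    conv_lhs => rw [P.as_sum_support_C_mul_X_pow, Q.as_sum_support_C_mul_X_pow, sum_mul_sum]
    simp only [C_mul, pow_add, mul_mul_mul_comm]
  calc normR R (P * Q)
      ≤ ∑ i ∈ P.support, ∑ j ∈ Q.support, ‖P.coeff i * Q.coeff j‖ * R ^ (i + j) := by
        rw [hPQ]
        refine (normR_sum_le hR _ _).trans (sum_le_sum fun i _ => ?_)
        exact (normR_sum_le hR _ _).trans_eq (sum_congr rfl fun j _ => normR_C_mul_X_pow _ _)
    _ = normR R P * normR R Q := by
        simp only [normR, sum_mul_sum, norm_mul, pow_add, mul_mul_mul_comm]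

end normR

lemma norm_betaIntegrand {x : ℝ} (hx : x ∈ Set.Ioo 0 1) (u v : ℂ) :
    ‖(x : ℂ) ^ (u - 1) * (1 - (x : ℂ)) ^ (v - 1)‖ = x ^ (u.re - 1) * (1 - x) ^ (v.re - 1) := by
  have h1x : 0 < 1 - x := sub_pos.mpr hx.2
  rw [norm_mul, Complex.norm_cpow_eq_rpow_re_of_pos hx.1, ← Complex.ofReal_one,
    ← Complex.ofReal_sub, Complex.norm_cpow_eq_rpow_re_of_pos h1x]
  simp

open MeasureTheory in
lemma norm_betaIntegral_le {δ : ℝ} (hδ : 0 < δ) {u v : ℂ} (hu : δ ≤ u.re) (hv : δ ≤ v.re) :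
    ‖Complex.betaIntegral u v‖ ≤ ∫ x in (0 : ℝ)..1, x ^ (δ - 1) * (1 - x) ^ (δ - 1) := by
  have hIoo : ∀ᵐ x : ℝ, x ∈ Set.Ioc (0 : ℝ) 1 → x ∈ Set.Ioo (0 : ℝ) 1 := by
    filter_upwards [volume.ae_ne 1] with x hx1 hx using ⟨hx.1, lt_of_le_of_ne hx.2 hx1⟩
  refine intervalIntegral.norm_integral_le_of_norm_le zero_le_one ?_ ?_
  · filter_upwards [hIoo] with x hx hxI
    obtain ⟨hx0, hx1⟩ := hx hxI
    rw [norm_betaIntegrand (hx hxI)]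
    gcongr ?_ * ?_
    · exact Real.rpow_le_rpow_of_exponent_ge hx0 hx1.le (by linarith)
    · exact Real.rpow_le_rpow_of_exponent_ge (by linarith) (by linarith) (by linarith)
  · have hδ' : 0 < (δ : ℂ).re := by simpa using hδ
    refine (Complex.betaIntegral_convergent hδ' hδ').norm.congr_ae ?_
    rw [Set.uIoc_of_le zero_le_one]
    filter_upwards [ae_restrict_of_ae hIoo, ae_restrict_mem measurableSet_Ioc] with x hx hxI
    rw [norm_betaIntegrand (hx hxI)]
    simp

lemma norm_Gamma_mul_Gamma_le {δ : ℝ} (hδ : 0 < δ) {u v : ℂ} (hu : δ ≤ u.re) (hv : δ ≤ v.re) :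
    ‖Complex.Gamma u‖ * ‖Complex.Gamma v‖ ≤
      (∫ x in (0 : ℝ)..1, x ^ (δ - 1) * (1 - x) ^ (δ - 1)) * ‖Complex.Gamma (u + v)‖ := by
  rw [← norm_mul, Complex.Gamma_mul_Gamma_eq_betaIntegral (hδ.trans_le hu) (hδ.trans_le hv),
    norm_mul, mul_comm]
  gcongr
  exact norm_betaIntegral_le hδ hu hv

noncomputable instance {ι : Type*} [Fintype ι] [DecidableEq ι] : HasAntidiagonal (ι → ℕ) :=
  HasAntidiagonal.antidiagonalOfLocallyFinite

section MultiIndex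

variable {κ : ℕ}

lemma msize_add (i j : Fin κ → ℕ) : msize (i + j) = msize i + msize j :=
  sum_add_distrib

lemma mdot_add (r : Fin κ → ℂ) (i j : Fin κ → ℕ) : mdot r (i + j) = mdot r i + mdot r j := by
  simp only [mdot, Pi.add_apply, Nat.cast_add, add_mul, sum_add_distrib]

lemma exists_pos_le_re_mdot_div {r : Fin κ → ℂ} (hr : ∀ i, 0 < (r i).re) {s : ℝ} (hs : 0 < s) :
    ∃ δ > 0, ∀ m ≠ 0, δ ≤ (mdot r m / (s : ℂ)).re := by
  obtain ⟨ε, hε, hεr⟩ := Pi.exists_forall_pos_add_lt (x := 0) hr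
  refine ⟨ε / s, div_pos hε hs, fun m hm => ?_⟩
  obtain ⟨k, hk⟩ := Function.ne_iff.mp hm
  have hre : (mdot r m).re = ∑ i, (m i : ℝ) * (r i).re := by simp [mdot, Complex.re_sum]
  rw [Complex.div_ofReal_re, hre]
  gcongr
  calc ε ≤ (r k).re := by simpa using (hεr k).le
    _ ≤ (m k : ℝ) * (r k).re :=
      le_mul_of_one_le_left (hr k).le (by exact_mod_cast Nat.one_le_iff_ne_zero.mpr hk)
    _ ≤ ∑ i, (m i : ℝ) * (r i).re :=
      single_le_sum (f := fun i => (m i : ℝ) * (r i).re)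
        (fun i _ => mul_nonneg (Nat.cast_nonneg _) (hr i).le) (mem_univ k)

end MultiIndex

section GammaWeight

variable {κ : ℕ} {r : Fin κ → ℂ} {s : ℝ}

noncomputable def gammaWeight (r : Fin κ → ℂ) (s : ℝ) (m : Fin κ → ℕ) : ℝ :=
  ‖Complex.Gamma (mdot r m / (s : ℂ))‖

lemma gammaWeight_pos (hr : ∀ i, 0 < (r i).re) (hs : 0 < s) {m : Fin κ → ℕ} (hm : m ≠ 0) :
    0 < gammaWeight r s m := by
  obtain ⟨δ, hδ, hδm⟩ := exists_pos_le_re_mdot_div hr hs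
  exact norm_pos_iff.mpr (Complex.Gamma_ne_zero_of_re_pos (hδ.trans_le (hδm m hm)))

lemma exists_gammaWeight_mul_le (hr : ∀ i, 0 < (r i).re) (hs : 0 < s) :
    ∃ C, 1 ≤ C ∧ ∀ i j : Fin κ → ℕ, i ≠ 0 → j ≠ 0 →
      gammaWeight r s i * gammaWeight r s j ≤ C * gammaWeight r s (i + j) := by
  obtain ⟨δ, hδ, hδm⟩ := exists_pos_le_re_mdot_div hr hs
  set B := ∫ x in (0 : ℝ)..1, x ^ (δ - 1) * (1 - x) ^ (δ - 1)
  refine ⟨max 1 B, le_max_left _ _, fun i j hi hj => ?_⟩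
  calc gammaWeight r s i * gammaWeight r s j ≤ B * gammaWeight r s (i + j) := by
        simp only [gammaWeight, mdot_add, add_div]
        exact norm_Gamma_mul_Gamma_le hδ (hδm i hi) (hδm j hj)
    _ ≤ max 1 B * gammaWeight r s (i + j) := by
        gcongr
        · exact norm_nonneg _
        · exact le_max_right _ _

lemma memH0_iff {R 𝒦 : ℝ} {η : (Fin κ → ℕ) → ℂ[X]} :
    memH0 r s R 𝒦 η ↔ η 0 = 0 ∧ (∀ m, ((η m).natDegree : ℝ) ≤ 𝒦 * msize m) ∧
      Summable fun m => normR R (η m) / gammaWeight r s m := by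
  refine and_congr_right fun h0 => and_congr_right' <|
    (Subtype.val_injective (p := fun m : Fin κ → ℕ => m ≠ 0)).summable_iff
      (f := fun m => normR R (η m) / gammaWeight r s m) fun m hm => ?_
  obtain rfl : m = 0 := by simpa using hm
  simp [h0, normR]

lemma norm0_eq_tsum {R : ℝ} {η : (Fin κ → ℕ) → ℂ[X]} (h0 : η 0 = 0) :
    norm0 r s R η = ∑' m, normR R (η m) / gammaWeight r s m := by
  refine tsum_subtype_eq_of_support_subset (s := {m | m ≠ 0})
    (f := fun m => normR R (η m) / gammaWeight r s m) fun m hm => ?_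
  rintro rfl
  simp [h0, normR] at hm

end GammaWeight

theorem summable_and_tsum_le_of_le_sum_antidiagonal {A : Type*} [AddCommMonoid A]
    [HasAntidiagonal A] {f g c : A → ℝ} {C : ℝ} (hf0 : 0 ≤ f) (hg0 : 0 ≤ g) (hc0 : 0 ≤ c)
    (hf : Summable f) (hg : Summable g)
    (hc : ∀ n, c n ≤ C * ∑ kl ∈ antidiagonal n, f kl.1 * g kl.2) :
    Summable c ∧ ∑' n, c n ≤ C * ((∑' n, f n) * ∑' n, g n) := by
  have hfg := hf.mul_of_nonneg hg hf0 hg0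
  have hbound := (summable_sum_mul_antidiagonal_of_summable_mul hfg).mul_left C
  have hcs : Summable c := hbound.of_nonneg_of_le hc0 hc
  refine ⟨hcs, ?_⟩
  rw [hf.tsum_mul_tsum_eq_tsum_sum_antidiagonal hg hfg, ← tsum_mul_left]
  exact hcs.tsum_le_tsum hc hbound

section Convolution

variable {κ : ℕ} {η₁ η₂ : (Fin κ → ℕ) → ℂ[X]}

lemma mconv_eq_sum_antidiagonal (η₁ η₂ : (Fin κ → ℕ) → ℂ[X]) (m : Fin κ → ℕ) :
    mconv η₁ η₂ m = ∑ kl ∈ antidiagonal m, η₁ kl.1 * η₂ kl.2 := by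
  rw [mconv, ← finsum_mem_coe_finset]
  simp only [mem_coe, HasAntidiagonal.mem_antidiagonal]

lemma mconv_apply_zero (h₁ : η₁ 0 = 0) : mconv η₁ η₂ 0 = 0 := by
  simp [mconv_eq_sum_antidiagonal, HasAntidiagonal.antidiagonal_zero, h₁]

lemma natDegree_mconv_le {𝒦 : ℝ} (h₁ : ∀ m, ((η₁ m).natDegree : ℝ) ≤ 𝒦 * msize m)
    (h₂ : ∀ m, ((η₂ m).natDegree : ℝ) ≤ 𝒦 * msize m) (m : Fin κ → ℕ) :
    ((mconv η₁ η₂ m).natDegree : ℝ) ≤ 𝒦 * msize m := by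
  have hm : 0 ≤ 𝒦 * msize m := (Nat.cast_nonneg _).trans (h₁ m)
  refine (Nat.cast_le.mpr ?_).trans (Nat.floor_le hm)
  rw [mconv_eq_sum_antidiagonal]
  refine natDegree_sum_le_of_forall_le _ _ fun kl hkl => natDegree_mul_le.trans (Nat.le_floor ?_)
  rw [← mem_antidiagonal.mp hkl, msize_add]
  push_cast
  linarith [h₁ kl.1, h₂ kl.2]

lemma normR_mul_div_le {R C : ℝ} (hR : 0 ≤ R) {w : (Fin κ → ℕ) → ℝ}
    (hw_pos : ∀ m ≠ 0, 0 < w m) (hw : ∀ i j, i ≠ 0 → j ≠ 0 → w i * w j ≤ C * w (i + j))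
    (h₁ : η₁ 0 = 0) (h₂ : η₂ 0 = 0) (i j : Fin κ → ℕ) :
    normR R (η₁ i * η₂ j) / w (i + j) ≤ C * (normR R (η₁ i) / w i * (normR R (η₂ j) / w j)) := by
  rcases eq_or_ne i 0 with rfl | hi
  · simp [h₁, normR]
  rcases eq_or_ne j 0 with rfl | hj
  · simp [h₂, normR]
  have hwi := hw_pos i hi
  have hwj := hw_pos j hj
  have hwij := hw_pos (i + j) (by simp [hi])
  calc normR R (η₁ i * η₂ j) / w (i + j)
      ≤ normR R (η₁ i) * normR R (η₂ j) * (1 / w (i + j)) := by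
        rw [mul_one_div]; gcongr; exact normR_mul_le hR _ _
    _ ≤ normR R (η₁ i) * normR R (η₂ j) * (C / (w i * w j)) := by
        refine mul_le_mul_of_nonneg_left ?_ (mul_nonneg (normR_nonneg hR _) (normR_nonneg hR _))
        rw [div_le_div_iff₀ hwij (mul_pos hwi hwj), one_mul]
        exact hw i j hi hj
    _ = C * (normR R (η₁ i) / w i * (normR R (η₂ j) / w j)) := by field_simp

lemma normR_mconv_div_le {R C : ℝ} (hR : 0 ≤ R) {w : (Fin κ → ℕ) → ℝ} (hw0 : 0 ≤ w)
    (hw_pos : ∀ m ≠ 0, 0 < w m) (hw : ∀ i j, i ≠ 0 → j ≠ 0 → w i * w j ≤ C * w (i + j))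
    (h₁ : η₁ 0 = 0) (h₂ : η₂ 0 = 0) (m : Fin κ → ℕ) :
    normR R (mconv η₁ η₂ m) / w m ≤
      C * ∑ kl ∈ antidiagonal m, normR R (η₁ kl.1) / w kl.1 * (normR R (η₂ kl.2) / w kl.2) := by
  calc normR R (mconv η₁ η₂ m) / w m
      ≤ (∑ kl ∈ antidiagonal m, normR R (η₁ kl.1 * η₂ kl.2)) / w m := by
        rw [mconv_eq_sum_antidiagonal]
        exact div_le_div_of_nonneg_right (normR_sum_le hR _ _) (hw0 m)
    _ = ∑ kl ∈ antidiagonal m, normR R (η₁ kl.1 * η₂ kl.2) / w (kl.1 + kl.2) := by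
        rw [sum_div]
        exact sum_congr rfl fun kl hkl => by rw [mem_antidiagonal.mp hkl]
    _ ≤ _ := by
        rw [mul_sum]
        exact sum_le_sum fun kl _ => normR_mul_div_le hR hw_pos hw h₁ h₂ kl.1 kl.2

end Convolution

theorem H0_submultiplicative_general (κ : ℕ) (r : Fin κ → ℂ)
    (hr : ∀ i, 0 < (r i).re) (s R 𝒦 : ℝ) (hs : 0 < s) (hR : 1 < R) :
    ∃ C : ℝ, 1 ≤ C ∧ ∀ η₁ η₂ : (Fin κ → ℕ) → Polynomial ℂ,
      memH0 r s R 𝒦 η₁ → memH0 r s R 𝒦 η₂ →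
        memH0 r s R 𝒦 (mconv η₁ η₂) ∧
        norm0 r s R (mconv η₁ η₂) ≤ C * norm0 r s R η₁ * norm0 r s R η₂ := by
  obtain ⟨C, hC, hw⟩ := exists_gammaWeight_mul_le hr hs
  refine ⟨C, hC, fun η₁ η₂ h₁ h₂ => ?_⟩
  rw [memH0_iff] at h₁ h₂
  obtain ⟨h₁0, h₁deg, h₁sum⟩ := h₁
  obtain ⟨h₂0, h₂deg, h₂sum⟩ := h₂
  have hR0 : 0 ≤ R := zero_le_one.trans hR.le
  have hw0 : 0 ≤ gammaWeight r s := fun m => norm_nonneg _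
  have hterm : ∀ η : (Fin κ → ℕ) → ℂ[X], 0 ≤ fun m => normR R (η m) / gammaWeight r s m :=
    fun η m => div_nonneg (normR_nonneg hR0 _) (hw0 m)
  obtain ⟨hsum, hle⟩ := summable_and_tsum_le_of_le_sum_antidiagonal (hterm η₁) (hterm η₂)
    (hterm _) h₁sum h₂sum
    (normR_mconv_div_le hR0 hw0 (fun _ => gammaWeight_pos hr hs) hw h₁0 h₂0)
  have h0 := mconv_apply_zero (η₂ := η₂) h₁0
  refine ⟨memH0_iff.mpr ⟨h0, natDegree_mconv_le h₁deg h₂deg, hsum⟩, ?_⟩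
  rw [norm0_eq_tsum h0, norm0_eq_tsum h₁0, norm0_eq_tsum h₂0, mul_assoc]
  exact hle

/-- Lemma 6: `H⁰` is closed under the convolution product, with
`‖η₁η₂‖_0 ≤ C ‖η₁‖_0 ‖η₂‖_0` for a constant `C ≥ 1` depending only on `r` and `s`. -/
theorem H0_submultiplicative (κ : ℕ) (hκ : 1 ≤ κ) (r : Fin κ → ℂ)
    (hr : ∀ i, 0 < (r i).re) (s R 𝒦 : ℝ) (hs : 0 < s) (hR : 1 < R) (h𝒦 : 0 ≤ 𝒦) :
    ∃ C : ℝ, 1 ≤ C ∧ ∀ η₁ η₂ : (Fin κ → ℕ) → Polynomial ℂ,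
      memH0 r s R 𝒦 η₁ → memH0 r s R 𝒦 η₂ →
        memH0 r s R 𝒦 (mconv η₁ η₂) ∧
        norm0 r s R (mconv η₁ η₂) ≤ C * norm0 r s R η₁ * norm0 r s R η₂ :=
  H0_submultiplicative_general κ r hr s R 𝒦 hs hR
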